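/- Let F : I → I be an injective map of an interval such that I is partitioned into two subintervals I_0, I_1 on each of which F is continuous and monotone (e.g., an affine contraction). Define P^1 = {I_0, I_1} and P^{t+1} = { F^{-1}(A) ∩ B : A ∈ P^t, B ∈ P^1 } \ {∅}. Then #P^{t+1} ≤ #P^t + 1 for all t, and hence #P^t ≤ t + 1 for all t ≥ 1. -/

import Mathlib

/-- Dynamical partitions: `dynPartition F P t` is the paper's `P^{t+1}`
(so `dynPartition F P 0 = P = P^1 = {I_0, I_1}`). -/
def dynPartition {X : Type*} (F : X → X) (P : Set (Set X)) : ℕ → Set (Set X)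
  | 0 => P
  | (t + 1) => {S | ∃ I ∈ dynPartition F P t, ∃ J ∈ P,
      S = F ⁻¹' I ∩ J ∧ S ≠ ∅}

/-!
The atoms of each `P^t` are pairwise disjoint intervals: pulling an interval back along a
map that is monotone or antitone on an interval piece gives an interval. The images `F(I₀)`
and `F(I₁)` are disjoint intervals, by continuity and injectivity, so one of them lies
entirely to the left of the other. Hence two distinct atoms of `P^t` cannot both meet `F(I₀)`
and `F(I₁)`: at most one atom splits when passing to `P^{t+1}`, and every other atom
contributes at most one piece.
-/

open Set

namespace Set

theorem OrdConnected.of_eq_Icc_or_Ico_or_Ioc_or_Ioo {α : Type*} [Preorder α] {s : Set α}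
    (h : ∃ a b : α, s = Icc a b ∨ s = Ico a b ∨ s = Ioc a b ∨ s = Ioo a b) :
    s.OrdConnected := by
  obtain ⟨a, b, rfl | rfl | rfl | rfl⟩ := h <;> infer_instance

theorem OrdConnected.forall_lt_or_forall_gt_of_disjoint {α : Type*} [LinearOrder α]
    {U V : Set α} (hU : U.OrdConnected) (hV : V.OrdConnected) (hUV : Disjoint U V) :
    (∀ u ∈ U, ∀ v ∈ V, u < v) ∨ (∀ u ∈ U, ∀ v ∈ V, v < u) := by
  by_contra! h
  obtain ⟨⟨u, hu, v, hv, hvu⟩, u', hu', v', hv', hu'v'⟩ := h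
  rcases le_total u' v with h | h
  · exact disjoint_left.1 hUV (hU.out hu' hu ⟨h, hvu⟩) hv
  · exact disjoint_left.1 hUV hu' (hV.out hv hv' ⟨h, hu'v'⟩)

theorem OrdConnected.preimage_inter_of_monotoneOn {α β : Type*} [Preorder α] [Preorder β]
    {f : α → β} {s : Set β} {J : Set α} (hs : s.OrdConnected) (hJ : J.OrdConnected)
    (hf : MonotoneOn f J) : (f ⁻¹' s ∩ J).OrdConnected := by
  refine ⟨fun x hx y hy z hz => ?_⟩
  have hzJ := hJ.out hx.2 hy.2 hz
  exact ⟨hs.out hx.1 hy.1 ⟨hf hx.2 hzJ hz.1, hf hzJ hy.2 hz.2⟩, hzJ⟩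

theorem OrdConnected.preimage_inter_of_antitoneOn {α β : Type*} [Preorder α] [Preorder β]
    {f : α → β} {s : Set β} {J : Set α} (hs : s.OrdConnected) (hJ : J.OrdConnected)
    (hf : AntitoneOn f J) : (f ⁻¹' s ∩ J).OrdConnected := by
  refine ⟨fun x hx y hy z hz => ?_⟩
  have hzJ := hJ.out hx.2 hy.2 hz
  exact ⟨hs.out hy.1 hx.1 ⟨hf hzJ hy.2 hz.2, hf hx.2 hzJ hz.1⟩, hzJ⟩

theorem subsingleton_setOf_inter_nonempty_and_inter_nonempty {α : Type*} [LinearOrder α]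
    {Q : Set (Set α)} (hQ : Q.PairwiseDisjoint id) (hQoc : ∀ A ∈ Q, A.OrdConnected)
    {U V : Set α} (hU : U.OrdConnected) (hV : V.OrdConnected) (hUV : Disjoint U V) :
    {A ∈ Q | (A ∩ U).Nonempty ∧ (A ∩ V).Nonempty}.Subsingleton := by
  rintro A ⟨hA, ⟨a, haA, haU⟩, ⟨b, hbA, hbV⟩⟩ A' ⟨hA', ⟨a', haA', haU'⟩, ⟨b', hbA', hbV'⟩⟩
  by_contra hne
  have hAA' : Disjoint A A' := hQ hA hA' hne
  rcases hU.forall_lt_or_forall_gt_of_disjoint hV hUV with hsepUV | hsepUV <;>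
    rcases (hQoc A hA).forall_lt_or_forall_gt_of_disjoint (hQoc A' hA') hAA' with hsepA | hsepA
  · exact lt_asymm (hsepUV a' haU' b hbV) (hsepA b hbA a' haA')
  · exact lt_asymm (hsepUV a haU b' hbV') (hsepA a haA b' hbA')
  · exact lt_asymm (hsepUV a haU b' hbV') (hsepA a haA b' hbA')
  · exact lt_asymm (hsepUV a' haU' b hbV) (hsepA b hbA a' haA')

end Set

theorem Nat.apply_le_apply_zero_add {f : ℕ → ℕ} (hf : ∀ n, f (n + 1) ≤ f n + 1) (n : ℕ) :
    f n ≤ f 0 + n := by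
  induction n with
  | zero => rfl
  | succ n ih => exact (hf n).trans (by omega)

section dynPartition

variable {X : Type*} {F : X → X} {P : Set (Set X)}

theorem finite_dynPartition (hP : P.Finite) (t : ℕ) : (dynPartition F P t).Finite := by
  induction t with
  | zero => exact hP
  | succ t ih =>
    refine (ih.image2 (fun A J => F ⁻¹' A ∩ J) hP).subset ?_
    rintro _ ⟨A, hA, J, hJ, rfl, -⟩
    exact mem_image2_of_mem hA hJ

theorem pairwiseDisjoint_dynPartition (hP : P.PairwiseDisjoint id) (t : ℕ) :
    (dynPartition F P t).PairwiseDisjoint id := by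
  induction t with
  | zero => exact hP
  | succ t ih =>
    rintro _ ⟨A, hA, J, hJ, rfl, -⟩ _ ⟨A', hA', J', hJ', rfl, -⟩ hne
    refine disjoint_left.2 fun x hx hx' => hne ?_
    rw [ih.elim_set hA hA' (F x) hx.1 hx'.1, hP.elim_set hJ hJ' x hx.2 hx'.2]

theorem ncard_dynPartition_succ_le_of_subsingleton {J₀ J₁ : Set X} {t : ℕ}
    (hfin : (dynPartition F {J₀, J₁} t).Finite)
    (hsplit : {A ∈ dynPartition F {J₀, J₁} t |
      (F ⁻¹' A ∩ J₀).Nonempty ∧ (F ⁻¹' A ∩ J₁).Nonempty}.Subsingleton) :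
    (dynPartition F {J₀, J₁} (t + 1)).ncard ≤ (dynPartition F {J₀, J₁} t).ncard + 1 := by
  set Q := dynPartition F {J₀, J₁} t
  let meets (J : Set X) : Set (Set X) := {A ∈ Q | (F ⁻¹' A ∩ J).Nonempty}
  have hmeets (J : Set X) : (meets J).Finite := hfin.subset (sep_subset _ _)
  have hsub : dynPartition F {J₀, J₁} (t + 1) ⊆
      (fun A => F ⁻¹' A ∩ J₀) '' meets J₀ ∪ (fun A => F ⁻¹' A ∩ J₁) '' meets J₁ := by
    rintro _ ⟨A, hA, J, hJ | hJ, rfl, hne⟩ <;> subst hJ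
    · exact Or.inl ⟨A, ⟨hA, nonempty_iff_ne_empty.2 hne⟩, rfl⟩
    · exact Or.inr ⟨A, ⟨hA, nonempty_iff_ne_empty.2 hne⟩, rfl⟩
  have hinter : (meets J₀ ∩ meets J₁).ncard ≤ 1 :=
    (ncard_le_one ((hmeets J₀).inter_of_left _)).2 fun A hA A' hA' =>
      hsplit ⟨hA.1.1, hA.1.2, hA.2.2⟩ ⟨hA'.1.1, hA'.1.2, hA'.2.2⟩
  calc (dynPartition F {J₀, J₁} (t + 1)).ncard
      ≤ ((fun A => F ⁻¹' A ∩ J₀) '' meets J₀ ∪ (fun A => F ⁻¹' A ∩ J₁) '' meets J₁).ncard :=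
        ncard_le_ncard hsub (((hmeets J₀).image _).union ((hmeets J₁).image _))
    _ ≤ (meets J₀).ncard + (meets J₁).ncard :=
        (ncard_union_le _ _).trans
          (add_le_add (ncard_image_le (hmeets J₀)) (ncard_image_le (hmeets J₁)))
    _ = (meets J₀ ∪ meets J₁).ncard + (meets J₀ ∩ meets J₁).ncard :=
        (ncard_union_add_ncard_inter _ _ (hmeets J₀) (hmeets J₁)).symm
    _ ≤ Q.ncard + 1 :=
        add_le_add (ncard_le_ncard (union_subset (sep_subset _ _) (sep_subset _ _)) hfin) hinter

end dynPartition

theorem ordConnected_of_mem_dynPartition {α : Type*} [Preorder α] {F : α → α}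
    {P : Set (Set α)} (hP : ∀ J ∈ P, J.OrdConnected ∧ (MonotoneOn F J ∨ AntitoneOn F J)) :
    ∀ {t : ℕ} {S : Set α}, S ∈ dynPartition F P t → S.OrdConnected
  | 0, S, hS => (hP S hS).1
  | _ + 1, _, ⟨A, hA, J, hJ, rfl, _⟩ => by
    have hAoc := ordConnected_of_mem_dynPartition hP hA
    rcases hP J hJ with ⟨hJoc, hF | hF⟩
    · exact hAoc.preimage_inter_of_monotoneOn hJoc hF
    · exact hAoc.preimage_inter_of_antitoneOn hJoc hF

theorem ncard_dynPartition_succ_le {α : Type*} [LinearOrder α] {F : α → α} {J₀ J₁ : Set α}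
    (hdisj : Disjoint J₀ J₁) (hJ₀ : J₀.OrdConnected) (hJ₁ : J₁.OrdConnected)
    (hF₀ : MonotoneOn F J₀ ∨ AntitoneOn F J₀) (hF₁ : MonotoneOn F J₁ ∨ AntitoneOn F J₁)
    (himg₀ : (F '' J₀).OrdConnected) (himg₁ : (F '' J₁).OrdConnected)
    (himg : Disjoint (F '' J₀) (F '' J₁)) (t : ℕ) :
    (dynPartition F {J₀, J₁} (t + 1)).ncard ≤ (dynPartition F {J₀, J₁} t).ncard + 1 := by
  have hP : ∀ J ∈ ({J₀, J₁} : Set (Set α)),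
      J.OrdConnected ∧ (MonotoneOn F J ∨ AntitoneOn F J) := by
    rintro J (rfl | rfl)
    exacts [⟨hJ₀, hF₀⟩, ⟨hJ₁, hF₁⟩]
  have hPdisj : ({J₀, J₁} : Set (Set α)).PairwiseDisjoint id :=
    (pairwiseDisjoint_singleton J₁ id).insert fun J hJ _ => (mem_singleton_iff.1 hJ) ▸ hdisj
  have hsplit := subsingleton_setOf_inter_nonempty_and_inter_nonempty
    (pairwiseDisjoint_dynPartition hPdisj t) (fun S hS => ordConnected_of_mem_dynPartition hP hS)
    himg₀ himg₁ himg
  refine ncard_dynPartition_succ_le_of_subsingleton (finite_dynPartition (toFinite _) t)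
    (hsplit.anti ?_)
  rintro A ⟨hA, ⟨x, hx⟩, ⟨y, hy⟩⟩
  exact ⟨hA, ⟨F x, hx.1, mem_image_of_mem F hx.2⟩, ⟨F y, hy.1, mem_image_of_mem F hy.2⟩⟩

theorem stmt_11_general (I I₀ I₁ : Set ℝ)
    (hI : I = I₀ ∪ I₁) (hdisj : Disjoint I₀ I₁)
    (hI₀ : ∃ a b : ℝ, I₀ = Set.Icc a b ∨ I₀ = Set.Ico a b ∨ I₀ = Set.Ioc a b ∨
      I₀ = Set.Ioo a b)
    (hI₁ : ∃ a b : ℝ, I₁ = Set.Icc a b ∨ I₁ = Set.Ico a b ∨ I₁ = Set.Ioc a b ∨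
      I₁ = Set.Ioo a b)
    (F : ℝ → ℝ) (hinj : Set.InjOn F I)
    (hc0 : ContinuousOn F I₀) (hc1 : ContinuousOn F I₁)
    (hm0 : MonotoneOn F I₀ ∨ AntitoneOn F I₀)
    (hm1 : MonotoneOn F I₁ ∨ AntitoneOn F I₁) :
    (∀ t : ℕ, (dynPartition F {I₀, I₁} (t + 1)).ncard ≤
        (dynPartition F {I₀, I₁} t).ncard + 1) ∧
    (∀ t : ℕ, 1 ≤ t → (dynPartition F {I₀, I₁} (t - 1)).ncard ≤ t + 1) := by
  subst hI
  have hoc₀ := OrdConnected.of_eq_Icc_or_Ico_or_Ioc_or_Ioo hI₀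
  have hoc₁ := OrdConnected.of_eq_Icc_or_Ico_or_Ioc_or_Ioo hI₁
  have himg : Disjoint (F '' I₀) (F '' I₁) := by
    rw [disjoint_iff_inter_eq_empty, ← hinj.image_inter subset_union_left subset_union_right,
      hdisj.inter_eq, image_empty]
  have step := ncard_dynPartition_succ_le hdisj hoc₀ hoc₁ hm0 hm1
    (hoc₀.isPreconnected.image F hc0).ordConnected (hoc₁.isPreconnected.image F hc1).ordConnected
    himg
  refine ⟨step, fun t ht => ?_⟩
  have hbound :=
    Nat.apply_le_apply_zero_add (f := fun t => (dynPartition F {I₀, I₁} t).ncard) step (t - 1)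
  have hP : (dynPartition F {I₀, I₁} 0).ncard ≤ 2 :=
    (ncard_insert_le _ _).trans (by rw [ncard_singleton])
  omega

/-- let `F : I → I` be injective on an interval `I ⊆ ℝ` partitioned into
two subintervals `I_0, I_1`, on each of which `F` is continuous and monotone.  Then the
dynamical partitions `P^1 = {I_0, I_1}`, `P^{t+1} = {F⁻¹(A) ∩ B : A ∈ P^t, B ∈ P^1}∖{∅}`
satisfy `#P^{t+1} ≤ #P^t + 1`, and hence `#P^t ≤ t + 1` for all `t ≥ 1`. -/
theorem stmt_11 (I I₀ I₁ : Set ℝ)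
    (hI : I = I₀ ∪ I₁) (hdisj : Disjoint I₀ I₁)
    (hI₀ : ∃ a b : ℝ, I₀ = Set.Icc a b ∨ I₀ = Set.Ico a b ∨ I₀ = Set.Ioc a b ∨
      I₀ = Set.Ioo a b)
    (hI₁ : ∃ a b : ℝ, I₁ = Set.Icc a b ∨ I₁ = Set.Ico a b ∨ I₁ = Set.Ioc a b ∨
      I₁ = Set.Ioo a b)
    (F : ℝ → ℝ) (hmaps : Set.MapsTo F I I) (hinj : Set.InjOn F I)
    (hc0 : ContinuousOn F I₀) (hc1 : ContinuousOn F I₁)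
    (hm0 : MonotoneOn F I₀ ∨ AntitoneOn F I₀)
    (hm1 : MonotoneOn F I₁ ∨ AntitoneOn F I₁) :
    (∀ t : ℕ, (dynPartition F {I₀, I₁} (t + 1)).ncard ≤
        (dynPartition F {I₀, I₁} t).ncard + 1) ∧
    (∀ t : ℕ, 1 ≤ t → (dynPartition F {I₀, I₁} (t - 1)).ncard ≤ t + 1) :=
  stmt_11_general I I₀ I₁ hI hdisj hI₀ hI₁ F hinj hc0 hc1 hm0 hm1
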